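/- In the root system of type F_4 with short simple roots α_3, α_4 and long simple roots α_1, α_2, the Coxeter numbers satisfy h_{α_3} = h_{α_4} = 12 = h and h_{α_1} = h_{α_2} = 9, where h = 12 is the Coxeter number of F_4. -/

import Mathlib

open scoped RealInnerProductSpace Classical

/-!
Doubling all coordinates puts the positive roots of `F_4` into `ℤ⁴`, where
`(γ, α∨) = 2 (γ ⬝ α) / (α ⬝ α)` is a ratio of integer dot products and its sign is that of
`γ ⬝ α`. Each `h_α` is thus an integer sum over the 24 positive roots divided by `α ⬝ α`,
and these finitely many integer computations are checked by evaluation.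
-/

/-- `pairing γ α = (γ, α∨) = 2(γ,α)/(α,α)`. -/
noncomputable def pairing {V : Type*} [NormedAddCommGroup V] [InnerProductSpace ℝ V]
    (γ α : V) : ℝ := 2 * ⟪γ, α⟫ / ⟪α, α⟫

/-- The Coxeter number of a root `α`: `h_α = Σ_{γ ∈ Φ⁺, (γ,α∨)>0} (γ, α∨)`. -/
noncomputable def coxeterOf {V : Type*} [NormedAddCommGroup V] [InnerProductSpace ℝ V]
    (Pos : Finset V) (α : V) : ℝ :=
  ∑ γ ∈ Pos.filter (fun γ => 0 < pairing γ α), pairing γ α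

/-- Standard basis vector of `ℝ⁴`. -/
noncomputable def f4e (i : Fin 4) : EuclideanSpace ℝ (Fin 4) :=
  EuclideanSpace.single i (1 : ℝ)

/-- `±1` sign attached to a boolean. -/
def sgn (b : Bool) : ℝ := if b then 1 else -1

/-- The positive roots of `F_4` (realised in `ℝ⁴`): `e_i`; `e_i ± e_j` for
`i < j`; and `(e_1 ± e_2 ± e_3 ± e_4)/2`. -/
noncomputable def F4pos : Finset (EuclideanSpace ℝ (Fin 4)) :=
  (Finset.univ.image fun i : Fin 4 => f4e i) ∪
    ((Finset.univ.filter fun p : Fin 4 × Fin 4 => p.1 < p.2).image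
      fun p => f4e p.1 - f4e p.2) ∪
    ((Finset.univ.filter fun p : Fin 4 × Fin 4 => p.1 < p.2).image
      fun p => f4e p.1 + f4e p.2) ∪
    ((Finset.univ : Finset (Bool × Bool × Bool)).image
      fun s => (2⁻¹ : ℝ) • (f4e 0 + sgn s.1 • f4e 1 + sgn s.2.1 • f4e 2 + sgn s.2.2 • f4e 3))

/-- The long simple root `α_1 = e_2 − e_3` of `F_4` (Bourbaki ordering). -/
noncomputable def f4alpha1 : EuclideanSpace ℝ (Fin 4) := f4e 1 - f4e 2

/-- The long simple root `α_2 = e_3 − e_4` of `F_4`. -/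
noncomputable def f4alpha2 : EuclideanSpace ℝ (Fin 4) := f4e 2 - f4e 3

/-- The short simple root `α_3 = e_4` of `F_4`. -/
noncomputable def f4alpha3 : EuclideanSpace ℝ (Fin 4) := f4e 3

/-- The short simple root `α_4 = (e_1 − e_2 − e_3 − e_4)/2` of `F_4`. -/
noncomputable def f4alpha4 : EuclideanSpace ℝ (Fin 4) :=
  (2⁻¹ : ℝ) • (f4e 0 - f4e 1 - f4e 2 - f4e 3)

noncomputable def halfCast (ι : Type*) [Fintype ι] : (ι → ℤ) →+ EuclideanSpace ℝ ι where
  toFun v := WithLp.toLp 2 fun i => (v i : ℝ) / 2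
  map_zero' := by ext; simp
  map_add' a b := by ext; simp [add_div]

section halfCast

variable {ι : Type*} [Fintype ι]

@[simp]
lemma halfCast_apply (v : ι → ℤ) (i : ι) : halfCast ι v i = (v i : ℝ) / 2 := rfl

lemma halfCast_injective : Function.Injective (halfCast ι) :=
  fun a b h => funext fun i => by simpa using congrArg (· i) h

lemma inner_halfCast (a b : ι → ℤ) :
    ⟪halfCast ι a, halfCast ι b⟫ = ((a ⬝ᵥ b : ℤ) : ℝ) / 4 := by
  simp only [PiLp.inner_apply, halfCast_apply, RCLike.inner_apply, conj_trivial, dotProduct,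
    Int.cast_sum, Int.cast_mul, Finset.sum_div]
  exact Finset.sum_congr rfl fun i _ => by ring

lemma halfCast_single [DecidableEq ι] (i : ι) (k : ℤ) :
    halfCast ι (Pi.single i k) = ((k : ℝ) / 2) • EuclideanSpace.single i 1 := by
  ext j
  rw [halfCast_apply, PiLp.smul_apply, PiLp.single_apply, Pi.single_apply]
  split_ifs <;> simp

lemma pairing_halfCast (a b : ι → ℤ) :
    pairing (halfCast ι a) (halfCast ι b) = 2 * ((a ⬝ᵥ b : ℤ) : ℝ) / ((b ⬝ᵥ b : ℤ) : ℝ) := by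
  rw [pairing, inner_halfCast, inner_halfCast]
  field_simp

lemma pairing_halfCast_pos_iff (a b : ι → ℤ) :
    0 < pairing (halfCast ι a) (halfCast ι b) ↔ 0 < a ⬝ᵥ b := by
  rcases eq_or_ne b 0 with rfl | hb
  · simp [pairing]
  have hbb : 0 < b ⬝ᵥ b := (Finset.sum_nonneg fun i _ => mul_self_nonneg (b i)).lt_of_ne'
    (dotProduct_self_eq_zero.not.mpr hb)
  rw [pairing_halfCast, div_pos_iff_of_pos_right (Int.cast_pos.mpr hbb)]
  norm_cast
  omega

lemma coxeterOf_image_halfCast (S : Finset (ι → ℤ)) (b : ι → ℤ) :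
    coxeterOf (S.image (halfCast ι)) (halfCast ι b) =
      ((∑ γ ∈ S.filter (fun γ => 0 < γ ⬝ᵥ b), 2 * γ ⬝ᵥ b : ℤ) : ℝ) / ((b ⬝ᵥ b : ℤ) : ℝ) := by
  rw [coxeterOf, Finset.filter_image, Finset.sum_image (fun x _ y _ h => halfCast_injective h)]
  simp only [pairing_halfCast_pos_iff]
  simp only [pairing_halfCast, ← Finset.sum_div]
  push_cast
  rfl

end halfCast

def zsgn (b : Bool) : ℤ := if b then 1 else -1

lemma cast_zsgn (b : Bool) : (zsgn b : ℝ) = sgn b := by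
  cases b <;> simp [zsgn, sgn]

def F4posInt : Finset (Fin 4 → ℤ) :=
  (Finset.univ.image fun i => Pi.single i 2) ∪
    ((Finset.univ.filter fun p : Fin 4 × Fin 4 => p.1 < p.2).image
      fun p => Pi.single p.1 2 - Pi.single p.2 2) ∪
    ((Finset.univ.filter fun p : Fin 4 × Fin 4 => p.1 < p.2).image
      fun p => Pi.single p.1 2 + Pi.single p.2 2) ∪
    ((Finset.univ : Finset (Bool × Bool × Bool)).image
      fun s => Pi.single 0 1 + Pi.single 1 (zsgn s.1) + Pi.single 2 (zsgn s.2.1) +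
        Pi.single 3 (zsgn s.2.2))

lemma F4pos_eq_image_halfCast : F4pos = F4posInt.image (halfCast (Fin 4)) := by
  simp only [F4pos, F4posInt, Finset.image_union, Finset.image_image, Function.comp_def,
    map_add, map_sub, halfCast_single, cast_zsgn, f4e]
  norm_num [smul_add, smul_smul, div_eq_inv_mul]

/-- In `F_4` with short simple roots `α_3, α_4` and long simple roots
`α_1, α_2`: `h_{α_3} = h_{α_4} = 12 = h`, the Coxeter number of `F_4`,
and `h_{α_1} = h_{α_2} = 9`. -/
theorem f4_coxeterOf :
    coxeterOf F4pos f4alpha3 = 12 ∧ coxeterOf F4pos f4alpha4 = 12 ∧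
    coxeterOf F4pos f4alpha1 = 9 ∧ coxeterOf F4pos f4alpha2 = 9 := by
  have h1 : f4alpha1 = halfCast (Fin 4) (Pi.single 1 2 - Pi.single 2 2) := by
    simp [f4alpha1, f4e, halfCast_single]
  have h2 : f4alpha2 = halfCast (Fin 4) (Pi.single 2 2 - Pi.single 3 2) := by
    simp [f4alpha2, f4e, halfCast_single]
  have h3 : f4alpha3 = halfCast (Fin 4) (Pi.single 3 2) := by
    simp [f4alpha3, f4e, halfCast_single]
  have h4 : f4alpha4 = halfCast (Fin 4)
      (Pi.single 0 1 - Pi.single 1 1 - Pi.single 2 1 - Pi.single 3 1) := by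
    simp [f4alpha4, f4e, halfCast_single, smul_sub]
  simp only [F4pos_eq_image_halfCast, h1, h2, h3, h4, coxeterOf_image_halfCast]
  -- numerators 48, 48, 72, 72 over squared lengths 4, 4, 8, 8
  refine ⟨?_, ?_, ?_, ?_⟩ <;>
    rw [div_eq_iff (Int.cast_ne_zero.mpr (by decide))] <;>
    exact_mod_cast (by decide : (_ : ℤ) = _)
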